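/- Let R be a commutative ring with an ultrametric norm ‖·‖ bounded by 1, and let f ∈ HahnSeries ℝ≥0 R be a nonzero Hahn series. Then the function ρ ↦ |f|_ρ, sending ρ to the Gauss norm of f of radius ρ, is continuous on the interval (0,1]. -/

import Mathlib

open scoped NNReal

/-- The Gauss norm of radius `ρ` of a Hahn (Mal'cev–Neumann) series
`f = Σ aᵢ tⁱ ∈ HahnSeries ℝ≥0 R`, with respect to a norm `n` on `R`:
`|f|_ρ = sup_{i ∈ supp f} n(aᵢ)·ρ^i` (with `|0|_ρ = 0`, since `sSup ∅ = 0` in `ℝ`). -/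
noncomputable def gaussNorm {R : Type} [CommRing R] (n : R → ℝ) (ρ : ℝ)
    (f : HahnSeries ℝ≥0 R) : ℝ :=
  sSup ((fun i : ℝ≥0 => n (f.coeff i) * ρ ^ (i : ℝ)) '' f.support)

/-!
`ρ ↦ |f|_ρ` is a supremum of continuous functions, hence lower semicontinuous, and it is monotone,
which gives upper semicontinuity from the left. From the right, the bound `n ≤ 1` yields the
interpolation inequality `|f|_{ρ^t} ≤ |f|_ρ ^ t` for `t ∈ [0, 1]`; writing `ρ = ρ₀ ^ logb ρ₀ ρ`
for `ρ₀ < ρ ≤ 1`, it bounds `|f|_ρ` by `|f|_{ρ₀} ^ logb ρ₀ ρ`, which tends to `|f|_{ρ₀}`.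
-/

open Set Filter Topology

theorem upperSemicontinuousWithinAt_of_eventually_le {α β : Type*} [TopologicalSpace α]
    [Preorder β] {g u : α → β} {s : Set α} {x : α} (hu : UpperSemicontinuousWithinAt u s x)
    (hux : u x ≤ g x) (hgu : g ≤ᶠ[𝓝[s] x] u) : UpperSemicontinuousWithinAt g s x :=
  fun y hy => (hu y (hux.trans_lt hy)).and hgu |>.mono fun _ h => h.2.trans_lt h.1

theorem Real.mul_rpow_le_mul_rpow_of_le_one {c x t : ℝ} (hc0 : 0 ≤ c) (hc1 : c ≤ 1)
    (hx : 0 ≤ x) (ht0 : 0 ≤ t) (ht1 : t ≤ 1) : c * x ^ t ≤ (c * x) ^ t := by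
  rw [Real.mul_rpow hc0 hx]
  gcongr
  simpa using Real.rpow_le_rpow_of_exponent_ge' hc0 hc1 ht0 ht1

section GaussNorm

variable {R : Type} [CommRing R] {n : R → ℝ} {f : HahnSeries ℝ≥0 R} {ρ : ℝ}

theorem gaussNorm_eq_iSup (n : R → ℝ) (ρ : ℝ) (f : HahnSeries ℝ≥0 R) :
    gaussNorm n ρ f = ⨆ i : f.support, n (f.coeff i) * ρ ^ (i : ℝ) :=
  sSup_image'

theorem gaussNorm_nonneg (hnonneg : ∀ a, 0 ≤ n a) (hρ : 0 ≤ ρ) : 0 ≤ gaussNorm n ρ f :=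
  (gaussNorm_eq_iSup n ρ f).symm ▸
    Real.iSup_nonneg fun _ => mul_nonneg (hnonneg _) (Real.rpow_nonneg hρ _)

theorem bddAbove_range_gaussNorm_terms (hbd : ∀ a, n a ≤ 1) (hρ0 : 0 ≤ ρ) (hρ1 : ρ ≤ 1) :
    BddAbove (range fun i : f.support => n (f.coeff i) * ρ ^ (i : ℝ)) :=
  ⟨1, forall_mem_range.2 fun i =>
    mul_le_one₀ (hbd _) (Real.rpow_nonneg hρ0 _) (Real.rpow_le_one hρ0 hρ1 i.1.coe_nonneg)⟩

theorem le_gaussNorm (hbd : ∀ a, n a ≤ 1) (hρ0 : 0 ≤ ρ) (hρ1 : ρ ≤ 1)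
    (i : f.support) : n (f.coeff i) * ρ ^ (i : ℝ) ≤ gaussNorm n ρ f :=
  (gaussNorm_eq_iSup n ρ f).symm ▸ le_ciSup (bddAbove_range_gaussNorm_terms hbd hρ0 hρ1) i

theorem gaussNorm_monotoneOn (hnonneg : ∀ a, 0 ≤ n a) (hbd : ∀ a, n a ≤ 1) :
    MonotoneOn (fun ρ => gaussNorm n ρ f) (Icc 0 1) := by
  intro ρ hρ ρ' hρ' hle
  simp only [gaussNorm_eq_iSup]
  exact ciSup_mono (bddAbove_range_gaussNorm_terms hbd hρ'.1 hρ'.2) fun i =>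
    mul_le_mul_of_nonneg_left (Real.rpow_le_rpow hρ.1 hle i.1.coe_nonneg) (hnonneg _)

theorem gaussNorm_rpow_le (hnonneg : ∀ a, 0 ≤ n a) (hbd : ∀ a, n a ≤ 1) (hρ0 : 0 ≤ ρ)
    (hρ1 : ρ ≤ 1) {t : ℝ} (ht0 : 0 ≤ t) (ht1 : t ≤ 1) :
    gaussNorm n (ρ ^ t) f ≤ gaussNorm n ρ f ^ t := by
  rw [gaussNorm_eq_iSup]
  refine Real.iSup_le (fun i => ?_) (Real.rpow_nonneg (gaussNorm_nonneg hnonneg hρ0) _)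
  calc n (f.coeff i) * (ρ ^ t) ^ (i : ℝ)
      = n (f.coeff i) * (ρ ^ (i : ℝ)) ^ t := by
        rw [← Real.rpow_mul hρ0, ← Real.rpow_mul hρ0, mul_comm t]
    _ ≤ (n (f.coeff i) * ρ ^ (i : ℝ)) ^ t :=
        Real.mul_rpow_le_mul_rpow_of_le_one (hnonneg _) (hbd _) (Real.rpow_nonneg hρ0 _) ht0 ht1
    _ ≤ gaussNorm n ρ f ^ t := by
        gcongr
        · exact mul_nonneg (hnonneg _) (Real.rpow_nonneg hρ0 _)
        · exact le_gaussNorm hbd hρ0 hρ1 i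

theorem gaussNorm_le_max_rpow_logb (hnonneg : ∀ a, 0 ≤ n a) (hbd : ∀ a, n a ≤ 1) {ρ₀ : ℝ}
    (hρ₀0 : 0 < ρ₀) (hρ₀1 : ρ₀ < 1) (hρ : ρ ∈ Ioc 0 1) :
    gaussNorm n ρ f ≤ max (gaussNorm n ρ₀ f) (gaussNorm n ρ₀ f ^ Real.logb ρ₀ ρ) := by
  rcases le_or_gt ρ ρ₀ with hle | hlt
  · exact le_max_of_le_left <| gaussNorm_monotoneOn hnonneg hbd ⟨hρ.1.le, hρ.2⟩
      ⟨hρ₀0.le, hρ₀1.le⟩ hle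
  · refine le_max_of_le_right ?_
    have ht0 : 0 ≤ Real.logb ρ₀ ρ := Real.logb_nonneg_of_base_lt_one hρ₀0 hρ₀1 hρ.1 hρ.2
    have ht1 : Real.logb ρ₀ ρ ≤ 1 := by
      rw [← Real.logb_self_eq_one_iff.2 ⟨hρ₀0.ne', hρ₀1.ne, by linarith⟩]
      exact (Real.logb_le_logb_of_base_lt_one hρ₀0 hρ₀1 hρ.1 hρ₀0).2 hlt.le
    calc gaussNorm n ρ f = gaussNorm n (ρ₀ ^ Real.logb ρ₀ ρ) f := by
          rw [Real.rpow_logb hρ₀0 hρ₀1.ne hρ.1]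
      _ ≤ gaussNorm n ρ₀ f ^ Real.logb ρ₀ ρ :=
          gaussNorm_rpow_le hnonneg hbd hρ₀0.le hρ₀1.le ht0 ht1

theorem gaussNorm_lowerSemicontinuousOn (hbd : ∀ a, n a ≤ 1) :
    LowerSemicontinuousOn (fun ρ => gaussNorm n ρ f) (Ioc 0 1) := by
  simp only [gaussNorm_eq_iSup]
  exact lowerSemicontinuousOn_ciSup
    (fun ρ hρ => bddAbove_range_gaussNorm_terms hbd hρ.1.le hρ.2) fun i =>
    (continuous_const.mul (Real.continuous_rpow_const i.1.coe_nonneg)).lowerSemicontinuous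
      |>.lowerSemicontinuousOn _

theorem gaussNorm_upperSemicontinuousOn (hnonneg : ∀ a, 0 ≤ n a) (hbd : ∀ a, n a ≤ 1) :
    UpperSemicontinuousOn (fun ρ => gaussNorm n ρ f) (Ioc 0 1) := by
  intro ρ₀ hρ₀
  rcases hρ₀.2.eq_or_lt with rfl | hρ₀1
  · exact upperSemicontinuousWithinAt_of_eventually_le upperSemicontinuousWithinAt_const le_rfl
      (eventually_nhdsWithin_of_forall fun ρ hρ =>
        gaussNorm_monotoneOn hnonneg hbd ⟨hρ.1.le, hρ.2⟩ ⟨zero_le_one, le_rfl⟩ hρ.2)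
  · have hlogb : Real.logb ρ₀ ρ₀ = 1 :=
      Real.logb_self_eq_one_iff.2 ⟨hρ₀.1.ne', hρ₀1.ne, by linarith [hρ₀.1]⟩
    have hcont : ContinuousAt
        (fun ρ => max (gaussNorm n ρ₀ f) (gaussNorm n ρ₀ f ^ Real.logb ρ₀ ρ)) ρ₀ :=
      continuousAt_const.max <| continuousAt_const.rpow (Real.continuousAt_logb hρ₀.1.ne')
        (Or.inr (hlogb ▸ one_pos))
    exact upperSemicontinuousWithinAt_of_eventually_le
      hcont.continuousWithinAt.upperSemicontinuousWithinAt (by simp [hlogb])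
      (eventually_nhdsWithin_of_forall fun ρ hρ =>
        gaussNorm_le_max_rpow_logb hnonneg hbd hρ₀.1 hρ₀1 hρ)

end GaussNorm

theorem gaussNorm_continuousOn_general
    (R : Type) [CommRing R] (n : R → ℝ)
    (hnonneg : ∀ a : R, 0 ≤ n a)
    (hbd : ∀ a : R, n a ≤ 1)
    (f : HahnSeries ℝ≥0 R) :
    ContinuousOn (fun ρ : ℝ => gaussNorm n ρ f) (Set.Ioc (0 : ℝ) 1) :=
  continuousOn_iff_lower_upperSemicontinuousOn.2
    ⟨gaussNorm_lowerSemicontinuousOn hbd, gaussNorm_upperSemicontinuousOn hnonneg hbd⟩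

/-- for a nonzero Mal'cev–Neumann series `f ∈ HahnSeries ℝ≥0 R` over a
commutative ring `R` with an ultrametric norm bounded by `1`, the Gauss norms
`ρ ↦ |f|_ρ` form a continuous family on `(0,1]`. -/
theorem gaussNorm_continuousOn
    (R : Type) [CommRing R] (n : R → ℝ)
    (hnonneg : ∀ a : R, 0 ≤ n a)
    (hzero : ∀ a : R, n a = 0 ↔ a = 0)
    (hmul : ∀ a b : R, n (a * b) ≤ n a * n b)
    (hadd : ∀ a b : R, n (a + b) ≤ max (n a) (n b))
    (hbd : ∀ a : R, n a ≤ 1)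
    (f : HahnSeries ℝ≥0 R) (hf : f ≠ 0) :
    ContinuousOn (fun ρ : ℝ => gaussNorm n ρ f) (Set.Ioc (0 : ℝ) 1) :=
  gaussNorm_continuousOn_general R n hnonneg hbd f
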